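/- arXiv:1307.3949 — 4 statements merged into one kernel-verified Lean document; each statement's English description precedes it below -/
import Mathlib

section
/- Let X = {x_1,…,x_n} ⊂ ℝ^d, let S = {s_1,…,s_k} ⊂ ℝ^d be pairwise distinct sites, and let K = (κ_1,…,κ_k) ∈ ℕ^k with κ_1 + … + κ_k = n. Then there exists a k-clustering of X of shape K minimizing ∑_{i=1}^k ∑_{x ∈ C_i} ‖s_i − x‖² among all k-clusterings of X of shape K, and for every such minimizing clustering C = (C_1,…,C_k) there exists γ ∈ ℝ^k such that every x ∈ C_i satisfies (s_j − s_i)^T x ≤ γ_j − γ_i for all j ≠ i (i.e., each cluster C_i is contained in its cell of the (S,γ)-power diagram). -/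
/-!
Optimality of `c` among the reassignments `c ∘ σ`, `σ` a permutation of the points (these keep
the shape), says that rotating points along a cycle of distinct clusters never lowers the cost.
Hence every walk of gains `g a j = f a (c a) - f a j` can be shortened, cycle by cycle, to one
through distinct clusters, so walk gains are bounded and `γ j := ⨆ (walks ending at j)` is a
potential (Bellman–Ford). For `f a j = ‖s j - x a‖²` the potential inequality expands to the
power-diagram inequality.
-/

open scoped RealInnerProductSpace
open Finset

variable {α ι : Type*}

theorem List.exists_cycle_of_not_nodup_map {β : Type*} (c : α → β) :
    ∀ {l : List α}, ¬ (l.map c).Nodup →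
      ∃ l₁ a l₂ b l₃, l = l₁ ++ a :: (l₂ ++ b :: l₃) ∧ c a = c b ∧ ((a :: l₂).map c).Nodup
  | [], h => absurd List.nodup_nil h
  | a :: l, h => by
    by_cases hl : (l.map c).Nodup
    · have hmem : c a ∈ l.map c := by
        by_contra hc
        exact h (List.nodup_cons.2 ⟨hc, hl⟩)
      obtain ⟨b, hb, hab⟩ := List.mem_map.1 hmem
      obtain ⟨l₂, l₃, rfl⟩ := List.append_of_mem hb
      refine ⟨[], a, l₂, b, l₃, rfl, hab.symm, List.nodup_cons.2 ⟨?_, ?_⟩⟩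
      · rw [← hab]
        simp only [List.map_append, List.map_cons] at hl
        exact fun h₂ => List.disjoint_of_nodup_append hl h₂ List.mem_cons_self
      · simp only [List.map_append] at hl
        exact hl.of_append_left
    · obtain ⟨l₁, a', l₂, b, l₃, rfl, hab, hnd⟩ := List.exists_cycle_of_not_nodup_map c hl
      exact ⟨a :: l₁, a', l₂, b, l₃, rfl, hab, hnd⟩

theorem List.Nodup.map_formPerm [DecidableEq α] {l : List α} (hl : l.Nodup) :
    l.map l.formPerm = l.rotate 1 :=
  List.ext_getElem (by simp) fun i h₁ h₂ => by
    simp [List.formPerm_apply_getElem _ hl, List.getElem_rotate]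

namespace Assignment

section Walk

variable (g : α → ι → ℝ) (c : α → ι)

/-- The walk `[a₀, …, aₘ]` ending at `j` moves each `aᵢ` to the cluster of `aᵢ₊₁` and `aₘ` to `j`. -/
def walkGain : List α → ι → ℝ
  | [], _ => 0
  | [a], j => g a j
  | a :: b :: l, j => g a (c b) + walkGain (b :: l) j

theorem walkGain_append_cons (l₁ : List α) (a : α) (l₂ : List α) (j : ι) :
    walkGain g c (l₁ ++ a :: l₂) j = walkGain g c l₁ (c a) + walkGain g c (a :: l₂) j := by
  induction l₁ with
  | nil => simp [walkGain]
  | cons b l ih =>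
    cases l with
    | nil => rfl
    | cons b' l => simp only [List.cons_append, walkGain] at ih ⊢; rw [ih]; ring

theorem walkGain_append_singleton (l : List α) (a : α) (j : ι) :
    walkGain g c (l ++ [a]) j = walkGain g c l (c a) + g a j :=
  walkGain_append_cons g c l a [] j

theorem walkGain_eq_sum_zipWith (l : List α) (j : ι) :
    walkGain g c l j = (List.zipWith g l (l.tail.map c ++ [j])).sum := by
  induction l with
  | nil => rfl
  | cons a l ih =>
    cases l with
    | nil => simp [walkGain]
    | cons b l => simp [walkGain, ih]

theorem walkGain_cycle_eq_sum [Fintype α] [DecidableEq α] (hg : ∀ a, g a (c a) = 0)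
    {a : α} {l : List α} (hl : (a :: l).Nodup) :
    walkGain g c (a :: l) (c a) = ∑ x, g x (c ((a :: l).formPerm x)) := by
  have hrot : l.map c ++ [c a] = ((a :: l).map (a :: l).formPerm).map c := by
    rw [hl.map_formPerm]; simp
  rw [walkGain_eq_sum_zipWith, List.tail_cons, hrot, List.zipWith_map_right,
    List.zipWith_map_right, List.zipWith_self, ← List.sum_toFinset _ hl]
  refine Finset.sum_subset (Finset.subset_univ _) fun x _ hx => ?_
  rw [List.formPerm_apply_of_notMem (by simpa using hx), hg]

theorem exists_nodup_map_walkGain_le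
    (hcyc : ∀ a l, ((a :: l).map c).Nodup → walkGain g c (a :: l) (c a) ≤ 0)
    (l : List α) (j : ι) :
    ∃ l' : List α, (l'.map c).Nodup ∧ walkGain g c l j ≤ walkGain g c l' j := by
  induction hn : l.length using Nat.strong_induction_on generalizing l with
  | _ n ih =>
  by_cases hl : (l.map c).Nodup
  · exact ⟨l, hl, le_rfl⟩
  obtain ⟨l₁, a, l₂, b, l₃, rfl, hab, hnd⟩ := List.exists_cycle_of_not_nodup_map c hl
  have hcut : walkGain g c (l₁ ++ a :: (l₂ ++ b :: l₃)) j
      = walkGain g c (l₁ ++ b :: l₃) j + walkGain g c (a :: l₂) (c a) := by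
    rw [walkGain_append_cons, ← List.cons_append, walkGain_append_cons, walkGain_append_cons, hab]
    ring
  obtain ⟨l', hl', hle⟩ := ih _ (by simp [← hn]) (l₁ ++ b :: l₃) rfl
  exact ⟨l', hl', by linarith [hcyc a l₂ hnd]⟩

end Walk

theorem exists_potential_of_forall_perm [Fintype α] (f : α → ι → ℝ) (c : α → ι)
    (hc : ∀ σ : Equiv.Perm α, ∑ a, f a (c a) ≤ ∑ a, f a (c (σ a))) :
    ∃ γ : ι → ℝ, ∀ a j, f a (c a) + γ (c a) ≤ f a j + γ j := by
  classical
  set g : α → ι → ℝ := fun a j => f a (c a) - f a j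
  have hcyc : ∀ a l, ((a :: l).map c).Nodup → walkGain g c (a :: l) (c a) ≤ 0 := by
    intro a l hl
    rw [walkGain_cycle_eq_sum g c (fun _ => sub_self _) (hl.of_map c), sum_sub_distrib]
    exact sub_nonpos.2 (hc _)
  have hbdd : ∀ j, BddAbove (Set.range fun l => walkGain g c l j) := by
    intro j
    obtain ⟨B, hB⟩ := ((List.finite_length_le α (Fintype.card α)).image
      fun l => walkGain g c l j).bddAbove
    refine ⟨B, ?_⟩
    rintro _ ⟨l, rfl⟩
    obtain ⟨l', hl', hle⟩ := exists_nodup_map_walkGain_le g c hcyc l j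
    exact hle.trans (hB ⟨l', (hl'.of_map c).length_le_card, rfl⟩)
  refine ⟨fun j => ⨆ l, walkGain g c l j, fun a j => ?_⟩
  have hext : ∀ l, walkGain g c l (c a) ≤ (⨆ l, walkGain g c l j) - g a j := fun l => by
    rw [le_sub_iff_add_le, ← walkGain_append_singleton]
    exact le_ciSup (hbdd j) _
  have := ciSup_le hext
  simp only [g] at this
  linarith

theorem card_filter_comp_perm_eq [Fintype α] [DecidableEq ι] (c : α → ι)
    (σ : Equiv.Perm α) (i : ι) :
    #{a | c (σ a) = i} = #{a | c a = i} := by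
  simp only [← Fintype.card_subtype]
  exact Fintype.card_congr (σ.subtypeEquiv fun _ => Iff.rfl)

theorem exists_card_fiber_eq [Fintype α] [Fintype ι] [DecidableEq ι] (κ : ι → ℕ)
    (hκ : ∑ i, κ i = Fintype.card α) :
    ∃ c : α → ι, ∀ i, #{a | c a = i} = κ i := by
  obtain ⟨e⟩ : Nonempty (α ≃ Σ i, Fin (κ i)) :=
    ⟨Fintype.equivOfCardEq (by simp [hκ])⟩
  refine ⟨fun a => (e a).1, fun i => ?_⟩
  rw [← Fintype.card_subtype, Fintype.card_congr ((e.subtypeEquiv fun _ => Iff.rfl).trans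
    (Equiv.sigmaSubtype i)), Fintype.card_fin]

theorem inner_sub_le_of_norm_sub_sq_add_le {E : Type*} [NormedAddCommGroup E]
    [InnerProductSpace ℝ E] {u v x : E} {a b : ℝ} (h : ‖u - x‖ ^ 2 + a ≤ ‖v - x‖ ^ 2 + b) :
    ⟪v - u, x⟫ ≤ (‖v‖ ^ 2 + b) / 2 - (‖u‖ ^ 2 + a) / 2 := by
  rw [norm_sub_sq_real, norm_sub_sq_real] at h
  rw [inner_sub_left]
  linarith

end Assignment

theorem balanced_least_squares_assignment_exists_and_allows_power_diagram_general
    (d k n : ℕ) (x : Fin n → EuclideanSpace ℝ (Fin d))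
    (s : Fin k → EuclideanSpace ℝ (Fin d))
    (κ : Fin k → ℕ) (hκ : ∑ i, κ i = n) :
    (∃ c : Fin n → Fin k,
      (∀ i, (univ.filter fun l => c l = i).card = κ i) ∧
      ∀ c' : Fin n → Fin k, (∀ i, (univ.filter fun l => c' l = i).card = κ i) →
        ∑ l, ‖s (c l) - x l‖ ^ 2 ≤ ∑ l, ‖s (c' l) - x l‖ ^ 2) ∧
    (∀ c : Fin n → Fin k,
      (∀ i, (univ.filter fun l => c l = i).card = κ i) →
      (∀ c' : Fin n → Fin k, (∀ i, (univ.filter fun l => c' l = i).card = κ i) →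
        ∑ l, ‖s (c l) - x l‖ ^ 2 ≤ ∑ l, ‖s (c' l) - x l‖ ^ 2) →
      ∃ γ : Fin k → ℝ, ∀ l : Fin n, ∀ j : Fin k, j ≠ c l →
        ⟪s j - s (c l), x l⟫ ≤ γ j - γ (c l)) := by
  constructor
  · obtain ⟨c₀, hc₀⟩ := Assignment.exists_card_fiber_eq (α := Fin n) κ (by simpa using hκ)
    obtain ⟨c, hc, hmin⟩ := exists_min_image {c : Fin n → Fin k | ∀ i, #{l | c l = i} = κ i}
      (fun c => ∑ l, ‖s (c l) - x l‖ ^ 2) ⟨c₀, by simpa using hc₀⟩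
    exact ⟨c, by simpa using hc, fun c' hc' => hmin c' (by simpa using hc')⟩
  · intro c hc hopt
    obtain ⟨γ, hγ⟩ := Assignment.exists_potential_of_forall_perm (fun l j => ‖s j - x l‖ ^ 2) c
      fun σ => hopt _ fun i => by rw [Assignment.card_filter_comp_perm_eq, hc]
    exact ⟨fun j => (‖s j‖ ^ 2 + γ j) / 2,
      fun l j _ => Assignment.inner_sub_le_of_norm_sub_sq_add_le (hγ l j)⟩

theorem balanced_least_squares_assignment_exists_and_allows_power_diagram
    (d k n : ℕ) (x : Fin n → EuclideanSpace ℝ (Fin d))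
    (s : Fin k → EuclideanSpace ℝ (Fin d)) (hs : Function.Injective s)
    (κ : Fin k → ℕ) (hκ : ∑ i, κ i = n) :
    (∃ c : Fin n → Fin k,
      (∀ i, (univ.filter fun l => c l = i).card = κ i) ∧
      ∀ c' : Fin n → Fin k, (∀ i, (univ.filter fun l => c' l = i).card = κ i) →
        ∑ l, ‖s (c l) - x l‖ ^ 2 ≤ ∑ l, ‖s (c' l) - x l‖ ^ 2) ∧
    (∀ c : Fin n → Fin k,
      (∀ i, (univ.filter fun l => c l = i).card = κ i) →
      (∀ c' : Fin n → Fin k, (∀ i, (univ.filter fun l => c' l = i).card = κ i) →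
        ∑ l, ‖s (c l) - x l‖ ^ 2 ≤ ∑ l, ‖s (c' l) - x l‖ ^ 2) →
      ∃ γ : Fin k → ℝ, ∀ l : Fin n, ∀ j : Fin k, j ≠ c l →
        ⟪s j - s (c l), x l⟫ ≤ γ j - γ (c l)) :=
  balanced_least_squares_assignment_exists_and_allows_power_diagram_general d k n x s κ hκ
end

section
/- Let X = {x_1,…,x_n} ⊂ ℝ^d, let S = {s_1,…,s_k} ⊂ ℝ^d be pairwise distinct sites, and let C = (C_1,…,C_k) be a k-clustering of X. If there exists γ ∈ ℝ^k such that every x ∈ C_i satisfies (s_j − s_i)^T x ≤ γ_j − γ_i for all j ≠ i, then C is a balanced (S,|C|)-least-squares assignment: for every k-clustering C' = (C'_1,…,C'_k) of X with |C'_i| = |C_i| for all i, one has ∑_{i=1}^k ∑_{x ∈ C_i} ‖s_i − x‖² ≤ ∑_{i=1}^k ∑_{x ∈ C'_i} ‖s_i − x‖². -/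
/-!
Writing `φ j = 2 γ j - ‖s j‖²`, the separation hypothesis says exactly that every point `x l`
minimizes the power distance `j ↦ ‖s j - x l‖² + φ j` at its own site `c l`. Summing over the
points, `c` minimizes the total power distance among all assignments; and for assignments of the
same shape the potential term `∑ l, φ (c l)` is the same, so `c` minimizes the least-squares cost.
-/

open scoped RealInnerProductSpace
open Finset

section Assignment

variable {ι κ M : Type*} [Fintype ι] [Fintype κ] [DecidableEq κ]

theorem Finset.sum_comp_eq_of_card_fiber_eq [AddCommMonoid M] {c c' : ι → κ}
    (hcard : ∀ j, #{l | c' l = j} = #{l | c l = j}) (f : κ → M) :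
    ∑ l, f (c' l) = ∑ l, f (c l) := by
  simp only [← sum_fiberwise' univ c f, ← sum_fiberwise' univ c' f, sum_const, hcard]

theorem Finset.sum_le_sum_of_forall_add_potential_le [AddCommMonoid M] [PartialOrder M]
    [IsOrderedCancelAddMonoid M] {cost : κ → ι → M} (φ : κ → M) {c c' : ι → κ}
    (hmin : ∀ l j, cost (c l) l + φ (c l) ≤ cost j l + φ j)
    (hcard : ∀ j, #{l | c' l = j} = #{l | c l = j}) :
    ∑ l, cost (c l) l ≤ ∑ l, cost (c' l) l := by
  have hsum : ∑ l, cost (c l) l + ∑ l, φ (c l) ≤ ∑ l, cost (c' l) l + ∑ l, φ (c' l) := by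
    simpa only [sum_add_distrib] using sum_le_sum fun l _ => hmin l (c' l)
  rwa [sum_comp_eq_of_card_fiber_eq hcard, add_le_add_iff_right] at hsum

end Assignment

theorem norm_sub_sq_add_le_of_inner_sub_le {E : Type*} [NormedAddCommGroup E]
    [InnerProductSpace ℝ E] {s t x : E} {a b : ℝ} (h : ⟪t - s, x⟫ ≤ b - a) :
    ‖s - x‖ ^ 2 + (2 * a - ‖s‖ ^ 2) ≤ ‖t - x‖ ^ 2 + (2 * b - ‖t‖ ^ 2) := by
  rw [inner_sub_left] at h
  rw [norm_sub_sq_real, norm_sub_sq_real]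
  linarith

theorem separating_power_diagram_implies_balanced_least_squares_general
    (d k n : ℕ) (x : Fin n → EuclideanSpace ℝ (Fin d))
    (s : Fin k → EuclideanSpace ℝ (Fin d))
    (c : Fin n → Fin k) (γ : Fin k → ℝ)
    (hsep : ∀ l : Fin n, ∀ j : Fin k, j ≠ c l →
      ⟪s j - s (c l), x l⟫ ≤ γ j - γ (c l)) :
    ∀ c' : Fin n → Fin k,
      (∀ i, (univ.filter fun l => c' l = i).card = (univ.filter fun l => c l = i).card) →
      ∑ l, ‖s (c l) - x l‖ ^ 2 ≤ ∑ l, ‖s (c' l) - x l‖ ^ 2 := by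
  intro c' hcard
  refine sum_le_sum_of_forall_add_potential_le (cost := fun j l => ‖s j - x l‖ ^ 2)
    (fun j => 2 * γ j - ‖s j‖ ^ 2) (fun l j => ?_) hcard
  obtain rfl | hj := eq_or_ne j (c l)
  · exact le_rfl
  · exact norm_sub_sq_add_le_of_inner_sub_le (hsep l j hj)

theorem separating_power_diagram_implies_balanced_least_squares
    (d k n : ℕ) (x : Fin n → EuclideanSpace ℝ (Fin d))
    (s : Fin k → EuclideanSpace ℝ (Fin d)) (hs : Function.Injective s)
    (c : Fin n → Fin k) (γ : Fin k → ℝ)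
    (hsep : ∀ l : Fin n, ∀ j : Fin k, j ≠ c l →
      ⟪s j - s (c l), x l⟫ ≤ γ j - γ (c l)) :
    ∀ c' : Fin n → Fin k,
      (∀ i, (univ.filter fun l => c' l = i).card = (univ.filter fun l => c l = i).card) →
      ∑ l, ‖s (c l) - x l‖ ^ 2 ≤ ∑ l, ‖s (c' l) - x l‖ ^ 2 :=
  separating_power_diagram_implies_balanced_least_squares_general d k n x s c γ hsep
end

section
/- Let C_i and C_j be nonempty finite subsets of ℝ^d with arithmetic means c_i and c_j, let s_i, s_j ∈ ℝ^d and γ_i, γ_j ∈ ℝ. Suppose (s_j − s_i)^T x ≤ γ_j − γ_i for all x ∈ C_i, and (s_i − s_j)^T x ≤ γ_i − γ_j for all x ∈ C_j, and (s_j − s_i)^T (c_j − c_i) = 0. Then (s_j − s_i)^T x = γ_j − γ_i for every x ∈ C_i ∪ C_j, i.e., all points of both clusters lie on the hyperplane {x : (s_j − s_i)^T x = γ_j − γ_i}. -/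
/-!
Write `a = sj - si` and `γ = γj - γi`. Averaging the two half-space constraints gives
`⟪a, ci⟫ ≤ γ ≤ ⟪a, cj⟫`, and `h0` says these two means coincide, so both equal `γ`. A finite
family lying in the half-space `⟪a, ·⟫ ≤ γ` whose mean lies on its boundary hyperplane lies
entirely on that hyperplane, since otherwise the average would be strictly below `γ`.
-/

open scoped RealInnerProductSpace
open Finset

namespace Finset

variable {ι : Type*} {s : Finset ι} {f : ι → ℝ} {b : ℝ}

theorem inv_card_mul_sum_le (hs : s.Nonempty) (hf : ∀ i ∈ s, f i ≤ b) :
    (#s : ℝ)⁻¹ * ∑ i ∈ s, f i ≤ b := by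
  rw [inv_mul_le_iff₀ (by exact_mod_cast hs.card_pos)]
  simpa using sum_le_card_nsmul s f b hf

theorem eq_of_le_of_le_inv_card_mul_sum (hf : ∀ i ∈ s, f i ≤ b)
    (hb : b ≤ (#s : ℝ)⁻¹ * ∑ i ∈ s, f i) : ∀ i ∈ s, f i = b := by
  rcases s.eq_empty_or_nonempty with rfl | hs
  · simp
  rw [le_inv_mul_iff₀ (by exact_mod_cast hs.card_pos)] at hb
  have hsum : ∑ i ∈ s, f i = ∑ _i ∈ s, b :=
    le_antisymm (sum_le_sum hf) (by rwa [sum_const, nsmul_eq_mul])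
  exact (sum_eq_sum_iff_of_le hf).mp hsum

end Finset

section InnerProductSpace

variable {E ι : Type*} [NormedAddCommGroup E] [InnerProductSpace ℝ E]
  {s : Finset ι} {x : ι → E} {a : E} {b : ℝ}

theorem real_inner_inv_card_smul_sum (a : E) (s : Finset ι) (x : ι → E) :
    ⟪a, (#s : ℝ)⁻¹ • ∑ i ∈ s, x i⟫ = (#s : ℝ)⁻¹ * ∑ i ∈ s, ⟪a, x i⟫ := by
  rw [real_inner_smul_right, inner_sum]

theorem real_inner_inv_card_smul_sum_le (hs : s.Nonempty) (hx : ∀ i ∈ s, ⟪a, x i⟫ ≤ b) :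
    ⟪a, (#s : ℝ)⁻¹ • ∑ i ∈ s, x i⟫ ≤ b := by
  rw [real_inner_inv_card_smul_sum]
  exact inv_card_mul_sum_le hs hx

theorem real_inner_eq_of_le_real_inner_inv_card_smul_sum (hx : ∀ i ∈ s, ⟪a, x i⟫ ≤ b)
    (hb : b ≤ ⟪a, (#s : ℝ)⁻¹ • ∑ i ∈ s, x i⟫) : ∀ i ∈ s, ⟪a, x i⟫ = b := by
  rw [real_inner_inv_card_smul_sum] at hb
  exact eq_of_le_of_le_inv_card_mul_sum hx hb

end InnerProductSpace

theorem clusters_on_hyperplane_of_mean_inner_eq_zero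
    (d : ℕ) (Ci Cj : Finset (EuclideanSpace ℝ (Fin d)))
    (hCi : Ci.Nonempty) (hCj : Cj.Nonempty)
    (si sj : EuclideanSpace ℝ (Fin d)) (γi γj : ℝ)
    (ci cj : EuclideanSpace ℝ (Fin d))
    (hci : ci = (Ci.card : ℝ)⁻¹ • ∑ y ∈ Ci, y)
    (hcj : cj = (Cj.card : ℝ)⁻¹ • ∑ y ∈ Cj, y)
    (h1 : ∀ y ∈ Ci, ⟪sj - si, y⟫ ≤ γj - γi)
    (h2 : ∀ y ∈ Cj, ⟪si - sj, y⟫ ≤ γi - γj)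
    (h0 : ⟪sj - si, cj - ci⟫ = 0) :
    ∀ y, y ∈ Ci ∨ y ∈ Cj → ⟪sj - si, y⟫ = γj - γi := by
  have hi : ⟪sj - si, ci⟫ ≤ γj - γi := hci ▸ real_inner_inv_card_smul_sum_le hCi h1
  have hj : ⟪si - sj, cj⟫ ≤ γi - γj := hcj ▸ real_inner_inv_card_smul_sum_le hCj h2
  have hneg : ∀ z, ⟪si - sj, z⟫ = -⟪sj - si, z⟫ := fun z => by
    rw [← inner_neg_left, neg_sub]
  have hij : ⟪sj - si, cj⟫ = ⟪sj - si, ci⟫ := by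
    rwa [inner_sub_right, sub_eq_zero] at h0
  rintro y (hy | hy)
  · refine real_inner_eq_of_le_real_inner_inv_card_smul_sum h1 ?_ y hy
    rw [← hci]
    linarith [hneg cj]
  · have hy' := real_inner_eq_of_le_real_inner_inv_card_smul_sum h2
      (by rw [← hcj]; linarith [hneg cj]) y hy
    linarith [hneg y]
end

section
/- Let X = {x_1,…,x_n} ⊂ ℝ^d (n ≥ 1) with a k-clustering with label function c, and let S = {s_1,…,s_k} ⊂ ℝ^d be pairwise distinct sites. Let t ∈ ℕ, t ≥ 1, be such that n·f_t < 1, where f_t := (t+1/2)/(t(t+1)) (in particular t = n satisfies this, since n·f_n = (n+1/2)/(n+1) < 1). Then the program (P'_MEP)(t) is unbounded: for every M ∈ ℝ there exist γ ∈ ℝ^k, ε ∈ ℝ, and ξ ∈ ℝ^n with ξ_l ≥ 0 and s_{ij}^T x_l + ε ≤ γ_{ij} + ξ_l for all l ≤ n and j ≠ i := c(l), such that ε − f_t ∑_{l=1}^n ξ_l > M. -/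
open scoped RealInnerProductSpace

theorem MEP_program_unbounded
    (d k n : ℕ) (hn : 1 ≤ n) (x : Fin n → EuclideanSpace ℝ (Fin d))
    (c : Fin n → Fin k)
    (s : Fin k → EuclideanSpace ℝ (Fin d)) (hs : Function.Injective s)
    (t : ℕ) (ht : 1 ≤ t)
    (hft : (n : ℝ) * (((t : ℝ) + 1 / 2) / ((t : ℝ) * ((t : ℝ) + 1))) < 1) :
    (n : ℝ) * (((n : ℝ) + 1 / 2) / ((n : ℝ) * ((n : ℝ) + 1))) < 1 ∧
    ∀ M : ℝ, ∃ (γ : Fin k → ℝ) (ε : ℝ) (ξ : Fin n → ℝ),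
      (∀ l, 0 ≤ ξ l) ∧
      (∀ l : Fin n, ∀ j : Fin k, j ≠ c l →
        ⟪s j - s (c l), x l⟫ / ‖s j - s (c l)‖ + ε ≤
          (γ j - γ (c l)) / ‖s j - s (c l)‖ + ξ l) ∧
      M < ε - (((t : ℝ) + 1 / 2) / ((t : ℝ) * ((t : ℝ) + 1))) * ∑ l, ξ l := by
  set f : ℝ := ((t : ℝ) + 1 / 2) / ((t : ℝ) * ((t : ℝ) + 1)) with hf
  have hnpos : (0 : ℝ) < n := by exact_mod_cast hn
  have htpos : (0 : ℝ) < t := by exact_mod_cast ht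
  have hfpos : 0 < f := by
    apply div_pos <;> positivity
  constructor
  · have hn1 : (1 : ℝ) ≤ n := by exact_mod_cast hn
    rw [show (n : ℝ) * (((n : ℝ) + 1 / 2) / ((n : ℝ) * ((n : ℝ) + 1)))
        = ((n : ℝ) + 1 / 2) / ((n : ℝ) + 1) by
      field_simp]
    rw [div_lt_one (by linarith)]
    linarith
  · intro M
    have hnf : (n : ℝ) * f < 1 := hft
    set C : ℝ := ∑ l, ‖x l‖ with hC
    have hCnn : 0 ≤ C := Finset.sum_nonneg (fun l _ => norm_nonneg _)
    set ε : ℝ := max 0 ((M + f * C + 1) / (1 - (n : ℝ) * f)) with hε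
    have hε0 : 0 ≤ ε := le_max_left _ _
    refine ⟨fun _ => 0, ε, fun l => ε + ‖x l‖, ?_, ?_, ?_⟩
    · intro l; positivity
    · intro l j hj
      have hsne : s j - s (c l) ≠ 0 := sub_ne_zero.mpr (fun h => hj (hs h))
      have hnorm : 0 < ‖s j - s (c l)‖ := norm_pos_iff.mpr hsne
      have hcs : ⟪s j - s (c l), x l⟫ ≤ ‖s j - s (c l)‖ * ‖x l‖ :=
        real_inner_le_norm _ _
      have : ⟪s j - s (c l), x l⟫ / ‖s j - s (c l)‖ ≤ ‖x l‖ := by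
        rw [div_le_iff₀ hnorm]; nlinarith
      simp only [sub_self, zero_div]
      linarith
    · have hsum : ∑ l, (ε + ‖x l‖) = (n : ℝ) * ε + C := by
        rw [Finset.sum_add_distrib, Finset.sum_const, Finset.card_univ]
        simp [hC, nsmul_eq_mul]
      rw [hsum]
      have h1 : (M + f * C + 1) / (1 - (n : ℝ) * f) ≤ ε := le_max_right _ _
      have h2 : M + f * C + 1 ≤ ε * (1 - (n : ℝ) * f) := by
        rw [div_le_iff₀ (by linarith)] at h1; linarith
      nlinarith
end
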